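/- arXiv:math-ph/0001011 — 4 statements merged into one kernel-verified Lean document; each statement's English description precedes it below -/
import Mathlib

section
/- If T_1, ..., T_n are self-adjoint operators satisfying the braid relations, and U_n = (T_1 ⋯ T_n)(T_1 ⋯ T_{n-1}) ⋯ T_1, then U_n is self-adjoint. -/
namespace Wick

variable {K : Type*} [NormedAddCommGroup K] [InnerProductSpace ℂ K] [CompleteSpace K]

/-- `T_1 T_2 ⋯ T_k`. -/
noncomputable def prodOp (T : ℕ → (K →L[ℂ] K)) (k : ℕ) : K →L[ℂ] K :=
  ((List.range k).map (fun j => T (j + 1))).prod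

/-- `U_n = (T_1 ⋯ T_n)(T_1 ⋯ T_{n-1}) ⋯ (T_1 T_2) T_1`. -/
noncomputable def Uop (T : ℕ → (K →L[ℂ] K)) (n : ℕ) : K →L[ℂ] K :=
  ((List.range n).map (fun j => prodOp T (n - j))).prod

/-- `T_k T_{k-1} ⋯ T_1`, the reversed product. -/
noncomputable def Qop (T : ℕ → (K →L[ℂ] K)) (k : ℕ) : K →L[ℂ] K :=
  ((List.range k).map (fun j => T (k - j))).prod

lemma prodOp_succ (T : ℕ → (K →L[ℂ] K)) (k : ℕ) :
    prodOp T (k + 1) = prodOp T k * T (k + 1) := by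
  simp [prodOp, List.range_succ]

lemma Qop_succ (T : ℕ → (K →L[ℂ] K)) (k : ℕ) :
    Qop T (k + 1) = T (k + 1) * Qop T k := by
  simp [Qop, List.range_succ_eq_map, List.map_map, Function.comp_def, Nat.succ_sub_succ]

lemma Uop_succ (T : ℕ → (K →L[ℂ] K)) (k : ℕ) :
    Uop T (k + 1) = prodOp T (k + 1) * Uop T k := by
  simp [Uop, List.range_succ_eq_map, List.map_map, Function.comp_def, Nat.succ_sub_succ]

/-- If `T_1, ..., T_n` are self-adjoint operators satisfying the braid relations, and
`U_n = (T_1 ⋯ T_n)(T_1 ⋯ T_{n-1}) ⋯ T_1`, then `U_n` is self-adjoint. -/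
theorem Uop_selfAdjoint (n : ℕ) (T : ℕ → (K →L[ℂ] K))
    (hsa : ∀ i, 1 ≤ i → i ≤ n → IsSelfAdjoint (T i))
    (hbraid : ∀ i, 1 ≤ i → i + 1 ≤ n → T i * T (i + 1) * T i = T (i + 1) * T i * T (i + 1))
    (hcomm : ∀ i j, 1 ≤ i → j ≤ n → i + 2 ≤ j → T i * T j = T j * T i) :
    IsSelfAdjoint (Uop T n) := by
  -- `T k` commutes with `prodOp T m` when `m + 2 ≤ k ≤ n`.
  have hcP : ∀ m k, m + 2 ≤ k → k ≤ n → T k * prodOp T m = prodOp T m * T k := by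
    intro m
    induction m with
    | zero => intro k _ _; simp [prodOp]
    | succ m ih =>
      intro k hk hkn
      rw [prodOp_succ, ← mul_assoc, ih k (by omega) hkn, mul_assoc,
        ← hcomm (m + 1) k (by omega) hkn (by omega), mul_assoc]
  -- `T k` commutes with `Uop T m` when `m + 2 ≤ k ≤ n`.
  have hcU : ∀ m k, m + 2 ≤ k → k ≤ n → T k * Uop T m = Uop T m * T k := by
    intro m
    induction m with
    | zero => intro k _ _; simp [Uop]
    | succ m ih =>
      intro k hk hkn
      rw [Uop_succ, ← mul_assoc, hcP (m + 1) k (by omega) hkn, mul_assoc,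
        ih k (by omega) hkn, mul_assoc]
  -- star of `prodOp` is `Qop`.
  have hstarP : ∀ k, k ≤ n → star (prodOp T k) = Qop T k := by
    intro k
    induction k with
    | zero => intro _; simp [prodOp, Qop]
    | succ k ih =>
      intro hk
      rw [prodOp_succ, star_mul, (hsa (k + 1) (by omega) hk).star_eq, ih (by omega),
        Qop_succ]
  -- key palindrome identity.
  have hkey : ∀ k, k + 1 ≤ n → Uop T k * Qop T (k + 1) = prodOp T (k + 1) * Uop T k := by
    intro k
    induction k with
    | zero => intro _; simp [Uop, Qop, prodOp, List.range_succ]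
    | succ k ih =>
      intro hk
      rw [Qop_succ, Uop_succ, mul_assoc, ← mul_assoc (Uop T k),
        ← hcU k (k + 2) (by omega) hk, mul_assoc (T (k + 2)), ih (by omega)]
      rw [prodOp_succ T (k + 1)]
      simp [mul_assoc]
  -- conclude by induction.
  have main : ∀ k, k ≤ n → star (Uop T k) = Uop T k := by
    intro k
    induction k with
    | zero => intro _; simp [Uop]
    | succ k ih =>
      intro hk
      rw [Uop_succ, star_mul, hstarP (k + 1) hk, ih (by omega), hkey k hk]
  exact main n le_rfl

end Wick
end

section
/- Let T be a self-adjoint contraction on H ⊗ H satisfying the braid relation on H^{⊗3}, and define P_2 = 1 + T, R_n = 1 + T_1 + T_1T_2 + ⋯ + T_1⋯T_{n-1}, P_{n+1} = (1 ⊗ P_n) R_{n+1}. Then for each k, ker(1 + T_k) ⊆ ker P_{n+1}, where T_k acts as T on the k-th and (k+1)-st tensor factors of H^{⊗(n+1)}. -/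
/-!
By induction on `n`, `P_{n+1}` is a left multiple of `1 + T_k`, i.e. lies in the left ideal
`Ideal.span {1 + T_k}` of the matrix ring. Write
`R_{n+1} = ∑_{j < k-1} T_1⋯T_j + T_1⋯T_{k-1} (1 + T_k) + ∑_{j > k} T_1⋯T_j`.
The middle term is a left multiple of `1 + T_k` outright. For `j < k - 1`, `T_k` commutes with
`T_1⋯T_j`, and `1 ⊗ P_n` is a left multiple of `1 ⊗ (1 + T_{k-1}) = 1 + T_k`. For `j > k`, the
braid relation moves `T_k` through the product, `(T_1⋯T_j) T_k = T_{k+1} (T_1⋯T_j)`, and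
`1 ⊗ P_n` is a left multiple of `1 + T_{k+1}`.

The commutation and braid relations on `H^{⊗n}` reduce to `H^{⊗2}` and `H^{⊗3}` because `T_i` is
`T` transported along the window of factors `i, i + 1`; transport along injections of tensor
factors is multiplicative and functorial, and transports along disjoint injections commute.
-/

open scoped ComplexOrder

namespace Wick

/-- The operator `T_i = 1^{⊗(i-1)} ⊗ T ⊗ 1^{⊗(n-i-1)}` on `H^{⊗n}` (1-indexed, acting on
tensor factors `i` and `i+1`), where `H = ℂ^d` and `H^{⊗n}` is identified with
functions `(Fin n → Fin d) → ℂ` via the basis of elementary tensors. -/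
noncomputable def Ti (d n : ℕ) (T : Matrix (Fin d × Fin d) (Fin d × Fin d) ℂ) (i : ℕ) :
    Matrix (Fin n → Fin d) (Fin n → Fin d) ℂ :=
  if h : 1 ≤ i ∧ i < n then
    fun w w' =>
      T (w ⟨i - 1, by omega⟩, w ⟨i, h.2⟩) (w' ⟨i - 1, by omega⟩, w' ⟨i, h.2⟩) *
        ∏ j : Fin n, if (j : ℕ) = i - 1 ∨ (j : ℕ) = i then 1 else (if w j = w' j then 1 else 0)
  else 1

/-- The product `T_1 T_2 ⋯ T_k` on `H^{⊗n}`. -/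
noncomputable def prodT (d n : ℕ) (T : Matrix (Fin d × Fin d) (Fin d × Fin d) ℂ) (k : ℕ) :
    Matrix (Fin n → Fin d) (Fin n → Fin d) ℂ :=
  ((List.range k).map (fun j => Ti d n T (j + 1))).prod

/-- The reversed product `T_k T_{k-1} ⋯ T_1` on `H^{⊗n}`. -/
noncomputable def prodTrev (d n : ℕ) (T : Matrix (Fin d × Fin d) (Fin d × Fin d) ℂ) (k : ℕ) :
    Matrix (Fin n → Fin d) (Fin n → Fin d) ℂ :=
  ((List.range k).map (fun j => Ti d n T (k - j))).prod

/-- `R_n = 1 + T_1 + T_1 T_2 + ⋯ + T_1 T_2 ⋯ T_{n-1}` on `H^{⊗n}`. -/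
noncomputable def Rmat (d n : ℕ) (T : Matrix (Fin d × Fin d) (Fin d × Fin d) ℂ) :
    Matrix (Fin n → Fin d) (Fin n → Fin d) ℂ :=
  ∑ k ∈ Finset.range n, prodT d n T k

/-- `1 ⊗ A` on `H^{⊗(n+1)}`, for `A` an operator on `H^{⊗n}`. -/
noncomputable def oneTensor (d n : ℕ) (A : Matrix (Fin n → Fin d) (Fin n → Fin d) ℂ) :
    Matrix (Fin (n + 1) → Fin d) (Fin (n + 1) → Fin d) ℂ :=
  fun w w' => (if w 0 = w' 0 then 1 else 0) * A (fun j => w j.succ) (fun j => w' j.succ)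

/-- `A ⊗ 1` on `H^{⊗(n+1)}`, for `A` an operator on `H^{⊗n}`. -/
noncomputable def tensorOne (d n : ℕ) (A : Matrix (Fin n → Fin d) (Fin n → Fin d) ℂ) :
    Matrix (Fin (n + 1) → Fin d) (Fin (n + 1) → Fin d) ℂ :=
  fun w w' =>
    A (fun j => w j.castSucc) (fun j => w' j.castSucc) *
      (if w (Fin.last n) = w' (Fin.last n) then 1 else 0)

/-- The operators `P_n` on `H^{⊗n}`: `P_1 = 1`, `P_{n+1} = (1 ⊗ P_n) R_{n+1}`
(so `P_2 = R_2 = 1 + T`). -/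
noncomputable def Pmat (d : ℕ) (T : Matrix (Fin d × Fin d) (Fin d × Fin d) ℂ) :
    (n : ℕ) → Matrix (Fin n → Fin d) (Fin n → Fin d) ℂ
  | 0 => 1
  | n + 1 => oneTensor d n (Pmat d T n) * Rmat d (n + 1) T

/-- `U_n = (T_1 ⋯ T_n)(T_1 ⋯ T_{n-1}) ⋯ (T_1 T_2) T_1` on `H^{⊗m}`. -/
noncomputable def Umat (d m : ℕ) (T : Matrix (Fin d × Fin d) (Fin d × Fin d) ℂ) (n : ℕ) :
    Matrix (Fin m → Fin d) (Fin m → Fin d) ℂ :=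
  ((List.range n).map (fun j => prodT d m T (n - j))).prod

/-- The braid condition `T_1 T_2 T_1 = T_2 T_1 T_2` on `H^{⊗3}`. -/
def Braided (d : ℕ) (T : Matrix (Fin d × Fin d) (Fin d × Fin d) ℂ) : Prop :=
  Ti d 3 T 1 * Ti d 3 T 2 * Ti d 3 T 1 = Ti d 3 T 2 * Ti d 3 T 1 * Ti d 3 T 2

/-- Elementary tensor `X ⊗ Y ∈ H^{⊗(n+m)}`. -/
noncomputable def tensorVec {d n m : ℕ} (X : (Fin n → Fin d) → ℂ) (Y : (Fin m → Fin d) → ℂ) :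
    (Fin (n + m) → Fin d) → ℂ :=
  fun u => X (fun i => u (Fin.castAdd m i)) * Y (fun j => u (Fin.natAdd n j))

abbrev Op (d n : ℕ) := Matrix (Fin n → Fin d) (Fin n → Fin d) ℂ

section Embedding

variable {d m n : ℕ}

/-- `A` acting on the tensor factors `e 0, …, e (m - 1)` of `H^{⊗n}` and as the identity on the
others. -/
def emb (e : Fin m → Fin n) (A : Op d m) : Op d n :=
  fun w w' => A (w ∘ e) (w' ∘ e) * if ∀ j, (∀ i, e i ≠ j) → w j = w' j then 1 else 0

noncomputable def patch (e : Fin m → Fin n) (w : Fin n → Fin d) (u : Fin m → Fin d) :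
    Fin n → Fin d :=
  fun j => if h : ∃ i, e i = j then u h.choose else w j

lemma patch_comp {e : Fin m → Fin n} (he : e.Injective) (w : Fin n → Fin d)
    (u : Fin m → Fin d) : patch e w u ∘ e = u := by
  funext i
  have h : ∃ i', e i' = e i := ⟨i, rfl⟩
  simp only [patch, Function.comp_apply, dif_pos h, he h.choose_spec]

lemma patch_of_notMem_range (e : Fin m → Fin n) (w : Fin n → Fin d) (u : Fin m → Fin d)
    {j : Fin n} (hj : ∀ i, e i ≠ j) : patch e w u j = w j :=
  dif_neg (not_exists.mpr hj)

lemma eq_patch_iff {e : Fin m → Fin n} (he : e.Injective) (w v : Fin n → Fin d) :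
    v = patch e w (v ∘ e) ↔ ∀ j, (∀ i, e i ≠ j) → w j = v j := by
  refine ⟨fun h j hj => by rw [h, patch_of_notMem_range e w _ hj], fun h => funext fun j => ?_⟩
  by_cases hj : ∃ i, e i = j
  · obtain ⟨i, rfl⟩ := hj
    exact (congrFun (patch_comp he w (v ∘ e)) i).symm
  · rw [patch_of_notMem_range e w _ (not_exists.mp hj), h j (not_exists.mp hj)]

lemma emb_mul {e : Fin m → Fin n} (he : e.Injective) (A B : Op d m) :
    emb e A * emb e B = emb e (A * B) := by
  ext w w''
  -- only the multi-indices `patch e w u` contribute to the matrix product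
  have hsupp : ∀ v ∉ Finset.univ.image (patch e w),
      emb e A w v * emb e B v w'' = 0 := fun v hv => by
    have : ¬ ∀ j, (∀ i, e i ≠ j) → w j = v j := fun h =>
      hv (Finset.mem_image.mpr ⟨v ∘ e, Finset.mem_univ _, ((eq_patch_iff he w v).mpr h).symm⟩)
    simp only [emb, if_neg this, mul_zero, zero_mul]
  have hinj : Set.InjOn (patch e w) (Finset.univ : Finset (Fin m → Fin d)) :=
    fun u _ u' _ h => by simpa only [patch_comp he] using congrArg (· ∘ e) h
  rw [Matrix.mul_apply, ← Finset.sum_subset (Finset.subset_univ _) fun v _ hv => hsupp v hv,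
    Finset.sum_image hinj, emb, Matrix.mul_apply, Finset.sum_mul]
  refine Finset.sum_congr rfl fun u _ => ?_
  have hleft : ∀ j, (∀ i, e i ≠ j) → w j = patch e w u j :=
    fun j hj => (patch_of_notMem_range e w u hj).symm
  have hright : (∀ j, (∀ i, e i ≠ j) → patch e w u j = w'' j) ↔
      ∀ j, (∀ i, e i ≠ j) → w j = w'' j :=
    forall₂_congr fun j hj => by rw [patch_of_notMem_range e w u hj]
  simp only [emb, patch_comp he, if_pos hleft, if_congr hright rfl rfl]
  ring

lemma emb_one (e : Fin m → Fin n) : emb e (1 : Op d m) = 1 := by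
  ext w w'
  simp only [emb, Matrix.one_apply, ite_zero_mul_ite_zero, mul_one]
  congr 1
  refine propext ⟨fun ⟨h, h'⟩ => funext fun j => ?_, by rintro rfl; simp⟩
  by_cases hj : ∃ i, e i = j
  · obtain ⟨i, rfl⟩ := hj
    exact congrFun h i
  · exact h' j (not_exists.mp hj)

lemma emb_add (e : Fin m → Fin n) (A B : Op d m) : emb e (A + B) = emb e A + emb e B := by
  ext w w'
  simp only [emb, Matrix.add_apply, add_mul]

lemma emb_comp {l : ℕ} {e : Fin m → Fin n} (he : e.Injective) (f : Fin l → Fin m)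
    (A : Op d l) : emb e (emb f A) = emb (e ∘ f) A := by
  ext w w'
  simp only [emb, mul_assoc, ite_zero_mul_ite_zero, mul_one]
  congr 2
  refine propext ⟨fun ⟨hf, he'⟩ j hj => ?_,
    fun h => ⟨fun i hi => h _ fun k hk => hi k (he hk), fun j hj => h j fun k => hj (f k)⟩⟩
  by_cases hje : ∃ i, e i = j
  · obtain ⟨i, rfl⟩ := hje
    exact hf i fun k hk => hj k (congrArg e hk)
  · exact he' j (not_exists.mp hje)

end Embedding

section DisjointSupports

open Kronecker

variable {d m m' n : ℕ}

lemma emb_castAdd (A : Op d m) :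
    emb (Fin.castAdd m') A =
      (A ⊗ₖ (1 : Op d m')).submatrix (Fin.appendEquiv m m').symm
        (Fin.appendEquiv m m').symm := by
  ext w w'
  simp only [emb, Matrix.submatrix_apply, Matrix.kroneckerMap_apply, Matrix.one_apply]
  congr 2
  refine propext ⟨fun h => funext fun i => h _ fun k hk => by
    have := congrArg Fin.val hk
    simp only [Fin.val_castAdd, Fin.val_natAdd] at this
    omega, ?_⟩
  intro h j hj
  induction j using Fin.addCases with
  | left i => exact absurd rfl (hj i)
  | right i => exact congrFun h i

lemma emb_natAdd (B : Op d m') :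
    emb (Fin.natAdd m) B =
      ((1 : Op d m) ⊗ₖ B).submatrix (Fin.appendEquiv m m').symm
        (Fin.appendEquiv m m').symm := by
  ext w w'
  simp only [emb, Matrix.submatrix_apply, Matrix.kroneckerMap_apply, Matrix.one_apply]
  rw [mul_comm]
  congr 2
  refine propext ⟨fun h => funext fun i => h _ fun k hk => by
    have := congrArg Fin.val hk
    simp only [Fin.val_castAdd, Fin.val_natAdd] at this
    omega, ?_⟩
  intro h j hj
  induction j using Fin.addCases with
  | left i => exact congrFun h i
  | right i => exact absurd rfl (hj i)

lemma emb_castAdd_mul_emb_natAdd_comm (A : Op d m) (B : Op d m') :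
    emb (Fin.castAdd m') A * emb (Fin.natAdd m) B =
      emb (Fin.natAdd m) B * emb (Fin.castAdd m') A := by
  simp only [emb_castAdd, emb_natAdd, Matrix.submatrix_mul_equiv, ← Matrix.mul_kronecker_mul,
    Matrix.one_mul, Matrix.mul_one]

lemma emb_mul_emb_comm {e : Fin m → Fin n} {f : Fin m' → Fin n} (he : e.Injective)
    (hf : f.Injective) (hef : ∀ i j, e i ≠ f j) (A : Op d m) (B : Op d m') :
    emb e A * emb f B = emb f B * emb e A := by
  have hg : (Fin.append e f).Injective := Fin.append_injective_iff.mpr ⟨he, hf, hef⟩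
  have hA : emb e A = emb (Fin.append e f) (emb (Fin.castAdd m') A) := by
    rw [emb_comp hg]
    exact congrArg (emb · A) (funext fun i => (Fin.append_left e f i).symm)
  have hB : emb f B = emb (Fin.append e f) (emb (Fin.natAdd m) B) := by
    rw [emb_comp hg]
    exact congrArg (emb · B) (funext fun i => (Fin.append_right e f i).symm)
  rw [hA, hB, emb_mul hg, emb_mul hg, emb_castAdd_mul_emb_natAdd_comm]

end DisjointSupports

section LocalOperators

variable {d m n : ℕ}

def window (s : ℕ) (h : s + m ≤ n) : Fin m → Fin n := fun a => ⟨s + a, by omega⟩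

lemma window_injective (s : ℕ) (h : s + m ≤ n) : (window s h).Injective :=
  fun a b hab => Fin.ext (by simpa [window] using hab)

lemma window_comp {l : ℕ} (s t : ℕ) (h : s + m ≤ n) (h' : t + l ≤ m) :
    window s h ∘ window t h' = window (s + t) (by omega) :=
  funext fun a => Fin.ext (by simp only [Function.comp_apply, window]; omega)

lemma Ti_apply_of_lt (T : Matrix (Fin d × Fin d) (Fin d × Fin d) ℂ) {i : ℕ} (hi : 1 ≤ i)
    (hin : i < n) (w w' : Fin n → Fin d) :
    Ti d n T i w w' =
      T (w ⟨i - 1, by omega⟩, w ⟨i, hin⟩) (w' ⟨i - 1, by omega⟩, w' ⟨i, hin⟩) *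
        ∏ j : Fin n,
          if (j : ℕ) = i - 1 ∨ (j : ℕ) = i then 1 else if w j = w' j then 1 else 0 := by
  simp [Ti, hi, hin]

lemma Ti_eq_emb_window (T : Matrix (Fin d × Fin d) (Fin d × Fin d) ℂ) {s : ℕ}
    (h : s + 2 ≤ n) : Ti d n T (s + 1) = emb (window s h) (Ti d 2 T 1) := by
  ext w w'
  simp only [emb, Ti_apply_of_lt T (by omega : 1 ≤ s + 1) h, Ti_apply_of_lt T le_rfl one_lt_two,
    ← ite_or, Fintype.prod_boole]
  have h2 : ∀ j : Fin 2, (j : ℕ) = 1 - 1 ∨ (j : ℕ) = 1 := fun j => by omega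
  have hw : ∀ v : Fin n → Fin d,
      (v ∘ window s h) ⟨1 - 1, by omega⟩ = v ⟨s + 1 - 1, by omega⟩ ∧
        (v ∘ window s h) ⟨1, by omega⟩ = v ⟨s + 1, h⟩ := fun v => ⟨rfl, rfl⟩
  simp only [h2, true_or, forall_const, if_true, mul_one, hw]
  congr 2
  refine propext (forall_congr' fun j => ?_)
  have hj : (∀ i : Fin 2, window s h i ≠ j) ↔
      ¬((j : ℕ) = s + 1 - 1 ∨ (j : ℕ) = s + 1) := by
    simp only [Fin.forall_fin_two, ne_eq, Fin.ext_iff, window]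
    omega
  rw [hj, or_iff_not_imp_left]

lemma Ti_eq_one (T : Matrix (Fin d × Fin d) (Fin d × Fin d) ℂ) {i : ℕ} (h : n ≤ i) :
    Ti d n T i = 1 :=
  dif_neg (by omega)

lemma Ti_comm (T : Matrix (Fin d × Fin d) (Fin d × Fin d) ℂ) {i j : ℕ} (hi : 1 ≤ i)
    (hij : i + 2 ≤ j) : Ti d n T i * Ti d n T j = Ti d n T j * Ti d n T i := by
  by_cases hjn : n ≤ j
  · rw [Ti_eq_one T hjn, one_mul, mul_one]
  obtain ⟨s, rfl⟩ : ∃ s, i = s + 1 := ⟨i - 1, by omega⟩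
  obtain ⟨t, rfl⟩ : ∃ t, j = t + 1 := ⟨j - 1, by omega⟩
  rw [Ti_eq_emb_window T (show s + 2 ≤ n by omega),
    Ti_eq_emb_window T (show t + 2 ≤ n by omega)]
  refine emb_mul_emb_comm (window_injective _ _) (window_injective _ _) (fun a b hab => ?_) _ _
  have := congrArg Fin.val hab
  simp only [window] at this
  omega

lemma Ti_braid {T : Matrix (Fin d × Fin d) (Fin d × Fin d) ℂ} (hT : Braided d T) {i : ℕ}
    (hi : 1 ≤ i) (hin : i + 1 < n) :
    Ti d n T i * Ti d n T (i + 1) * Ti d n T i =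
      Ti d n T (i + 1) * Ti d n T i * Ti d n T (i + 1) := by
  obtain ⟨s, rfl⟩ : ∃ s, i = s + 1 := ⟨i - 1, by omega⟩
  have hW := window_injective s (show s + 3 ≤ n by omega)
  have h1 : Ti d n T (s + 1) = emb (window s (by omega)) (Ti d 3 T 1) := by
    rw [Ti_eq_emb_window T (show 0 + 2 ≤ 3 by omega), emb_comp hW, window_comp]
    exact Ti_eq_emb_window T _
  have h2 : Ti d n T (s + 1 + 1) = emb (window s (by omega)) (Ti d 3 T 2) := by
    rw [Ti_eq_emb_window T (show 1 + 2 ≤ 3 by omega), emb_comp hW, window_comp, Ti_eq_emb_window]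
  rw [h1, h2, emb_mul hW, emb_mul hW, hT, ← emb_mul hW, ← emb_mul hW]

end LocalOperators

section Products

variable {d m : ℕ} {T : Matrix (Fin d × Fin d) (Fin d × Fin d) ℂ}

lemma prodT_succ (k : ℕ) : prodT d m T (k + 1) = prodT d m T k * Ti d m T (k + 1) := by
  simp [prodT, List.range_succ]

lemma prodT_mul_Ti_comm {r k : ℕ} (hrk : r + 2 ≤ k) :
    prodT d m T r * Ti d m T k = Ti d m T k * prodT d m T r := by
  induction r with
  | zero => simp [prodT]
  | succ r ih =>
      rw [prodT_succ, mul_assoc, Ti_comm T (by omega) hrk, ← mul_assoc, ih (by omega), mul_assoc]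

lemma prodT_mul_Ti_braid (hT : Braided d T) {j r : ℕ} (hj : 1 ≤ j) (hjr : j + 1 ≤ r)
    (hrm : r < m) : prodT d m T r * Ti d m T j = Ti d m T (j + 1) * prodT d m T r := by
  obtain ⟨i, rfl⟩ : ∃ i, j = i + 1 := ⟨j - 1, by omega⟩
  induction r, hjr using Nat.le_induction with
  | base =>
      calc prodT d m T (i + 1 + 1) * Ti d m T (i + 1)
          = prodT d m T i * (Ti d m T (i + 1) * Ti d m T (i + 1 + 1) * Ti d m T (i + 1)) := by
            simp only [prodT_succ, mul_assoc]
        _ = prodT d m T i * Ti d m T (i + 1 + 1) * (Ti d m T (i + 1) * Ti d m T (i + 1 + 1)) := by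
            rw [Ti_braid hT (by omega) hrm]
            simp only [mul_assoc]
        _ = Ti d m T (i + 1 + 1) * prodT d m T (i + 1 + 1) := by
            rw [prodT_mul_Ti_comm le_rfl]
            simp only [prodT_succ, mul_assoc]
  | succ r hr ih =>
      rw [prodT_succ, mul_assoc, ← Ti_comm T (by omega) (by omega : i + 1 + 2 ≤ r + 1),
        ← mul_assoc, ih (by omega), mul_assoc, ← prodT_succ]

lemma Rmat_eq_split {k : ℕ} (hk : 1 ≤ k) (hkm : k < m) :
    Rmat d m T = ∑ j ∈ Finset.range (k - 1), prodT d m T j +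
      prodT d m T (k - 1) * (1 + Ti d m T k) + ∑ j ∈ Finset.Ico (k + 1) m, prodT d m T j := by
  obtain ⟨i, rfl⟩ : ∃ i, k = i + 1 := ⟨k - 1, by omega⟩
  rw [Nat.add_sub_cancel, Rmat, ← Finset.sum_range_add_sum_Ico _ (show i ≤ m by omega),
    Finset.sum_eq_sum_Ico_succ_bot (show i < m by omega),
    Finset.sum_eq_sum_Ico_succ_bot (show i + 1 < m by omega), mul_add, mul_one, ← prodT_succ]
  abel

end Products

section OneTensor

variable {d n : ℕ}

lemma oneTensor_eq_emb (A : Op d n) : oneTensor d n A = emb Fin.succ A := by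
  ext w w'
  simp only [oneTensor, emb, Function.comp_def]
  rw [mul_comm]
  congr 2
  refine propext ⟨fun h j hj => ?_, fun h => h 0 fun i => Fin.succ_ne_zero i⟩
  induction j using Fin.cases with
  | zero => exact h
  | succ i => exact absurd rfl (hj i)

lemma oneTensor_mul (A B : Op d n) : oneTensor d n (A * B) = oneTensor d n A * oneTensor d n B := by
  simp only [oneTensor_eq_emb, emb_mul (Fin.succ_injective n)]

lemma oneTensor_add (A B : Op d n) : oneTensor d n (A + B) = oneTensor d n A + oneTensor d n B := by
  simp only [oneTensor_eq_emb, emb_add]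

lemma oneTensor_one : oneTensor d n (1 : Op d n) = 1 := by
  rw [oneTensor_eq_emb, emb_one]

lemma oneTensor_Ti (T : Matrix (Fin d × Fin d) (Fin d × Fin d) ℂ) {i : ℕ} (hi : 1 ≤ i)
    (hin : i < n) : oneTensor d n (Ti d n T i) = Ti d (n + 1) T (i + 1) := by
  obtain ⟨s, rfl⟩ : ∃ s, i = s + 1 := ⟨i - 1, by omega⟩
  rw [oneTensor_eq_emb, Ti_eq_emb_window T (show s + 2 ≤ n by omega),
    emb_comp (Fin.succ_injective n), Ti_eq_emb_window T (show s + 1 + 2 ≤ n + 1 by omega)]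
  congr 1
  funext a
  ext
  simp only [Function.comp_apply, window, Fin.val_succ]
  omega

lemma oneTensor_mem_span {T : Matrix (Fin d × Fin d) (Fin d × Fin d) ℂ} {i : ℕ} (hi : 1 ≤ i)
    (hin : i < n) {A : Op d n} (hA : A ∈ Ideal.span {1 + Ti d n T i}) :
    oneTensor d n A ∈ Ideal.span {1 + Ti d (n + 1) T (i + 1)} := by
  obtain ⟨Q, rfl⟩ := Ideal.mem_span_singleton'.mp hA
  exact Ideal.mem_span_singleton'.mpr ⟨oneTensor d n Q, by
    rw [oneTensor_mul, oneTensor_add, oneTensor_one, oneTensor_Ti T hi hin]⟩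

end OneTensor

lemma mul_mem_span_singleton_of_mul_eq {R : Type*} [Semiring R] {x a b s : R}
    (hx : x ∈ Ideal.span {a}) (h : a * s = s * b) : x * s ∈ Ideal.span {b} := by
  obtain ⟨q, rfl⟩ := Ideal.mem_span_singleton'.mp hx
  exact Ideal.mem_span_singleton'.mpr ⟨q * s, by rw [mul_assoc q a, h, mul_assoc]⟩

lemma Pmat_mem_span {d : ℕ} {T : Matrix (Fin d × Fin d) (Fin d × Fin d) ℂ} (hT : Braided d T)
    {n k : ℕ} (hk : 1 ≤ k) (hkn : k ≤ n) :
    Pmat d T (n + 1) ∈ Ideal.span {1 + Ti d (n + 1) T k} := by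
  induction n generalizing k with
  | zero => omega
  | succ n ih =>
    rw [Pmat, Rmat_eq_split hk (by omega), mul_add, mul_add, Finset.mul_sum, Finset.mul_sum]
    refine add_mem (add_mem (Ideal.sum_mem _ fun j hj => ?_) ?_) (Ideal.sum_mem _ fun j hj => ?_)
    · rw [Finset.mem_range] at hj
      have hP := oneTensor_mem_span (by omega) (by omega) (ih (k := k - 1) (by omega) (by omega))
      rw [Nat.sub_add_cancel hk] at hP
      refine mul_mem_span_singleton_of_mul_eq hP ?_
      rw [add_mul, mul_add, one_mul, mul_one, prodT_mul_Ti_comm (by omega)]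
    · rw [← mul_assoc]
      exact Ideal.mul_mem_left _ _ (Ideal.mem_span_singleton_self _)
    · rw [Finset.mem_Ico] at hj
      have hP := oneTensor_mem_span hk (by omega) (ih hk (by omega))
      refine mul_mem_span_singleton_of_mul_eq hP ?_
      rw [add_mul, mul_add, one_mul, mul_one, prodT_mul_Ti_braid hT hk (by omega) hj.2]

lemma ker_mulVecLin_le_of_mem_span {ι R : Type*} [Fintype ι] [DecidableEq ι] [CommSemiring R]
    {A B : Matrix ι ι R} (h : A ∈ Ideal.span {B}) :
    LinearMap.ker B.mulVecLin ≤ LinearMap.ker A.mulVecLin := by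
  obtain ⟨Q, rfl⟩ := Ideal.mem_span_singleton'.mp h
  intro v hv
  simp only [LinearMap.mem_ker, Matrix.mulVecLin_apply] at hv ⊢
  rw [← Matrix.mulVec_mulVec, hv, Matrix.mulVec_zero]

theorem ker_one_add_Tk_le_ker_P_general (d n : ℕ) (T : Matrix (Fin d × Fin d) (Fin d × Fin d) ℂ)
    (hbraid : Braided d T) (k : ℕ) (hk1 : 1 ≤ k) (hk2 : k ≤ n) :
    LinearMap.ker (1 + Ti d (n + 1) T k).mulVecLin ≤
      LinearMap.ker (Pmat d T (n + 1)).mulVecLin :=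
  ker_mulVecLin_le_of_mem_span (Pmat_mem_span hbraid hk1 hk2)

/-- Let `T` be a self-adjoint contraction on `H ⊗ H` satisfying the braid relation on
`H^{⊗3}`, with `P_2 = 1 + T`, `R_n = 1 + T_1 + T_1T_2 + ⋯ + T_1⋯T_{n-1}`,
`P_{n+1} = (1 ⊗ P_n) R_{n+1}`.  Then for each `k = 1, ..., n`,
`ker(1 + T_k) ⊆ ker P_{n+1}`, where `T_k` acts as `T` on the `k`-th and `(k+1)`-st
tensor factors of `H^{⊗(n+1)}`. -/
theorem ker_one_add_Tk_le_ker_P (d n : ℕ) (T : Matrix (Fin d × Fin d) (Fin d × Fin d) ℂ)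
    (hsa : T.IsHermitian) (hcontr : ‖Matrix.toEuclideanCLM (𝕜 := ℂ) T‖ ≤ 1)
    (hbraid : Braided d T) (k : ℕ) (hk1 : 1 ≤ k) (hk2 : k ≤ n) :
    LinearMap.ker (1 + Ti d (n + 1) T k).mulVecLin ≤
      LinearMap.ker (Pmat d T (n + 1)).mulVecLin :=
  ker_one_add_Tk_le_ker_P_general d n T hbraid k hk1 hk2

end Wick
end

section
/- Let T_1,...,T_n be self-adjoint contractions satisfying the braid relations and U_n as above. Then 1 − U_n² = (1 − T_1²) + T_1(1 − T_2²)T_1 + T_1T_2(1 − T_3²)T_2T_1 + ⋯ + T_1⋯T_{n-1}(1 − T_n²)T_{n-1}⋯T_1 + T_1T_2⋯T_n(1 − U_{n-1}²)T_n⋯T_2T_1. -/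
namespace Wick

set_option linter.unusedSectionVars false

variable {K : Type*} [NormedAddCommGroup K] [InnerProductSpace ℂ K] [CompleteSpace K]

/-- `T_k T_{k-1} ⋯ T_1`. -/
noncomputable def prodOpRev (T : ℕ → (K →L[ℂ] K)) (k : ℕ) : K →L[ℂ] K :=
  ((List.range k).map (fun j => T (k - j))).prod

lemma prodOp_zero (T : ℕ → (K →L[ℂ] K)) : prodOp T 0 = 1 := rfl

lemma prodOpRev_zero (T : ℕ → (K →L[ℂ] K)) : prodOpRev T 0 = 1 := rfl

lemma Uop_zero (T : ℕ → (K →L[ℂ] K)) : Uop T 0 = 1 := rfl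

lemma prodOpRev_succ (T : ℕ → (K →L[ℂ] K)) (k : ℕ) :
    prodOpRev T (k + 1) = T (k + 1) * prodOpRev T k := by
  simp only [prodOpRev, List.range_succ_eq_map, List.map_cons, List.map_map, List.prod_cons,
    Nat.sub_zero, Function.comp]
  congr 2
  simp [Function.comp_def, Nat.succ_sub_succ]

section

variable (n : ℕ) (T : ℕ → (K →L[ℂ] K))
  (hbraid : ∀ i, 1 ≤ i → i + 1 ≤ n → T i * T (i + 1) * T i = T (i + 1) * T i * T (i + 1))
  (hcomm : ∀ i j, 1 ≤ i → j ≤ n → i + 2 ≤ j → T i * T j = T j * T i)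

include hcomm in
/-- `T x` commutes with `T_1 ⋯ T_r` when `r + 2 ≤ x`. -/
lemma comm_prodOp (r x : ℕ) (hrx : r + 2 ≤ x) (hx : x ≤ n) :
    T x * prodOp T r = prodOp T r * T x := by
  induction r with
  | zero => simp [prodOp_zero]
  | succ r ih =>
    rw [prodOp_succ, ← mul_assoc, ih (by omega), mul_assoc,
      ← hcomm (r + 1) x (by omega) hx (by omega), mul_assoc]

include hbraid hcomm in
/-- Shift lemma: `(T_1 ⋯ T_m) T_j = T_{j+1} (T_1 ⋯ T_m)` for `1 ≤ j ≤ m - 1`. -/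
lemma prodOp_mul_T (j m : ℕ) (hj : 1 ≤ j) (hjm : j + 1 ≤ m) (hm : m ≤ n) :
    prodOp T m * T j = T (j + 1) * prodOp T m := by
  obtain ⟨j', rfl⟩ : ∃ j', j = j' + 1 := ⟨j - 1, by omega⟩
  induction m with
  | zero => omega
  | succ m ih =>
    rcases Nat.lt_or_ge (j' + 1 + 1) (m + 1) with h | h
    · -- j' + 2 ≤ m : commute T (j'+1) past T (m+1) and use the IH
      rw [prodOp_succ, mul_assoc, ← hcomm (j' + 1) (m + 1) hj hm (by omega),
        ← mul_assoc, ih (by omega) (by omega), mul_assoc]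
    · -- m = j' + 1 : use the braid relation
      have hmj : m = j' + 1 := by omega
      subst hmj
      calc prodOp T (j' + 1 + 1) * T (j' + 1)
          = prodOp T j' * (T (j' + 1) * T (j' + 1 + 1) * T (j' + 1)) := by
            rw [prodOp_succ, prodOp_succ]; simp [mul_assoc]
        _ = prodOp T j' * (T (j' + 1 + 1) * T (j' + 1) * T (j' + 1 + 1)) := by
            rw [hbraid (j' + 1) (by omega) hm]
        _ = T (j' + 1 + 1) * (prodOp T j' * (T (j' + 1) * T (j' + 1 + 1))) := by
            rw [mul_assoc, ← mul_assoc (prodOp T j'),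
              ← comm_prodOp n T hcomm j' (j' + 1 + 1) (by omega) (by omega), mul_assoc]
        _ = T (j' + 1 + 1) * prodOp T (j' + 1 + 1) := by
            rw [prodOp_succ, prodOp_succ, mul_assoc]

include hbraid hcomm in
/-- `(T_1 ⋯ T_m)(T_1 ⋯ T_r) = (T_2 ⋯ T_{r+1})(T_1 ⋯ T_m)` for `r + 1 ≤ m`. -/
lemma prodOp_mul_prodOp (r m : ℕ) (hrm : r + 1 ≤ m) (hm : m ≤ n) :
    prodOp T m * prodOp T r = prodOp (fun i => T (i + 1)) r * prodOp T m := by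
  induction r with
  | zero => simp [prodOp_zero]
  | succ r ih =>
    rw [prodOp_succ, ← mul_assoc, ih (by omega),
      mul_assoc, prodOp_mul_T n T hbraid hcomm (r + 1) m (by omega) hrm hm,
      prodOp_succ (fun i => T (i + 1)) r, mul_assoc]

include hbraid hcomm in
/-- `(T_1 ⋯ T_m) U_k = sh(U_k) (T_1 ⋯ T_m)` for `k + 1 ≤ m`, where `sh` shifts indices. -/
lemma prodOp_mul_Uop (k m : ℕ) (hkm : k + 1 ≤ m) (hm : m ≤ n) :
    prodOp T m * Uop T k = Uop (fun i => T (i + 1)) k * prodOp T m := by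
  induction k with
  | zero => simp [Uop_zero]
  | succ k ih =>
    rw [Uop_succ, ← mul_assoc, prodOp_mul_prodOp n T hbraid hcomm (k + 1) m hkm hm,
      mul_assoc, ih (by omega), Uop_succ (fun i => T (i + 1)) k, mul_assoc]

include hbraid hcomm in
/-- Key identity: `(T_1 ⋯ T_m) U_{m-1} = U_{m-1} (T_m ⋯ T_1)`. -/
lemma prodOp_mul_Uop_pred (m : ℕ) (hm1 : 1 ≤ m) (hm : m ≤ n) :
    prodOp T m * Uop T (m - 1) = Uop T (m - 1) * prodOpRev T m := by
  induction m with
  | zero => omega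
  | succ m ih =>
    rcases Nat.eq_zero_or_pos m with rfl | hm0
    · show prodOp T 1 * Uop T 0 = Uop T 0 * prodOpRev T 1
      rw [Uop_zero, one_mul, mul_one]
      show prodOp (K := K) T (0 + 1) = prodOpRev T (0 + 1)
      rw [prodOp_succ, prodOpRev_succ, prodOp_zero, prodOpRev_zero, one_mul, mul_one]
    · obtain ⟨m', rfl⟩ : ∃ m', m = m' + 1 := ⟨m - 1, by omega⟩
      have ih' : prodOp T (m' + 1) * Uop T m' = Uop T m' * prodOpRev T (m' + 1) :=
        ih (by omega) (by omega)
      have hB1 : prodOp T (m' + 2) * Uop T m' =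
          Uop (fun i => T (i + 1)) m' * prodOp T (m' + 2) :=
        prodOp_mul_Uop n T hbraid hcomm m' (m' + 2) (by omega) (by omega)
      have hB2 : prodOp T (m' + 1) * Uop T m' =
          Uop (fun i => T (i + 1)) m' * prodOp T (m' + 1) :=
        prodOp_mul_Uop n T hbraid hcomm m' (m' + 1) (by omega) (by omega)
      have hE : prodOp T (m' + 2) * prodOpRev T (m' + 1) =
          prodOp T (m' + 1) * prodOpRev T (m' + 2) := by
        rw [prodOp_succ T (m' + 1), prodOpRev_succ T (m' + 1), mul_assoc, ← mul_assoc]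
      show prodOp T (m' + 2) * Uop T (m' + 1) = Uop T (m' + 1) * prodOpRev T (m' + 2)
      calc prodOp T (m' + 2) * Uop T (m' + 1)
          = prodOp T (m' + 2) * (prodOp T (m' + 1) * Uop T m') := by rw [Uop_succ]
        _ = prodOp T (m' + 2) * (Uop T m' * prodOpRev T (m' + 1)) := by rw [ih']
        _ = (prodOp T (m' + 2) * Uop T m') * prodOpRev T (m' + 1) := by rw [mul_assoc]
        _ = (Uop (fun i => T (i + 1)) m' * prodOp T (m' + 2)) * prodOpRev T (m' + 1) := by
            rw [hB1]
        _ = Uop (fun i => T (i + 1)) m' * (prodOp T (m' + 2) * prodOpRev T (m' + 1)) := by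
            rw [mul_assoc]
        _ = Uop (fun i => T (i + 1)) m' * (prodOp T (m' + 1) * prodOpRev T (m' + 2)) := by
            rw [hE]
        _ = (Uop (fun i => T (i + 1)) m' * prodOp T (m' + 1)) * prodOpRev T (m' + 2) := by
            rw [mul_assoc]
        _ = (prodOp T (m' + 1) * Uop T m') * prodOpRev T (m' + 2) := by rw [hB2]
        _ = Uop T (m' + 1) * prodOpRev T (m' + 2) := by rw [← Uop_succ]

end

/-- For self-adjoint contractions `T_1, ..., T_n` satisfying the braid relations,
`1 − U_n² = (1 − T_1²) + T_1(1 − T_2²)T_1 + T_1T_2(1 − T_3²)T_2T_1 + ⋯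
 + T_1⋯T_{n-1}(1 − T_n²)T_{n-1}⋯T_1 + T_1T_2⋯T_n(1 − U_{n-1}²)T_n⋯T_2T_1`. -/
theorem one_sub_Usq_decomposition (n : ℕ) (hn : 1 ≤ n) (T : ℕ → (K →L[ℂ] K))
    (hsa : ∀ i, 1 ≤ i → i ≤ n → IsSelfAdjoint (T i))
    (hcontr : ∀ i, 1 ≤ i → i ≤ n → ‖T i‖ ≤ 1)
    (hbraid : ∀ i, 1 ≤ i → i + 1 ≤ n → T i * T (i + 1) * T i = T (i + 1) * T i * T (i + 1))
    (hcomm : ∀ i j, 1 ≤ i → j ≤ n → i + 2 ≤ j → T i * T j = T j * T i) :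
    1 - (Uop T n) ^ 2 =
      (∑ k ∈ Finset.Icc 1 n, prodOp T (k - 1) * (1 - (T k) ^ 2) * prodOpRev T (k - 1)) +
        prodOp T n * (1 - (Uop T (n - 1)) ^ 2) * prodOpRev T n := by
  set S : ℕ → (K →L[ℂ] K) := fun k => prodOp T k * prodOpRev T k with hS
  -- each summand telescopes
  have hterm : ∀ k, prodOp T k * (1 - (T (k + 1)) ^ 2) * prodOpRev T k = S k - S (k + 1) := by
    intro k
    have h : prodOp T k * (1 - (T (k + 1)) ^ 2) * prodOpRev T k =
        prodOp T k * prodOpRev T k -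
          (prodOp T k * T (k + 1)) * (T (k + 1) * prodOpRev T k) := by
      rw [sq]; noncomm_ring
    rw [h, hS, ← prodOp_succ, ← prodOpRev_succ]
  -- the sum telescopes
  have hsum : (∑ k ∈ Finset.Icc 1 n, prodOp T (k - 1) * (1 - (T k) ^ 2) * prodOpRev T (k - 1)) =
      1 - S n := by
    rw [← Finset.Ico_add_one_right_eq_Icc, Finset.sum_Ico_eq_sum_range]
    have h : ∀ i ∈ Finset.range (n + 1 - 1),
        prodOp T (1 + i - 1) * (1 - (T (1 + i)) ^ 2) * prodOpRev T (1 + i - 1) =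
          S i - S (i + 1) := by
      intro i _
      have h1 : 1 + i - 1 = i := by omega
      have h2 : 1 + i = i + 1 := by omega
      rw [h1, h2, hterm]
    rw [Finset.sum_congr rfl h, Finset.sum_range_sub' S (n + 1 - 1)]
    have hS0 : S 0 = 1 := by simp [hS, prodOp_zero, prodOpRev_zero]
    rw [hS0]
    norm_num
  rw [hsum]
  -- reduce to U_n² = P_n U_{n-1}² P_n^rev
  have key : (Uop T n) ^ 2 = prodOp T n * (Uop T (n - 1)) ^ 2 * prodOpRev T n := by
    obtain ⟨m, rfl⟩ : ∃ m, n = m + 1 := ⟨n - 1, by omega⟩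
    have hkey : prodOp T (m + 1) * Uop T m = Uop T m * prodOpRev T (m + 1) :=
      prodOp_mul_Uop_pred (m + 1) T hbraid hcomm (m + 1) (by omega) le_rfl
    show (Uop T (m + 1)) ^ 2 = prodOp T (m + 1) * (Uop T m) ^ 2 * prodOpRev T (m + 1)
    rw [sq, sq, Uop_succ]
    calc prodOp T (m + 1) * Uop T m * (prodOp T (m + 1) * Uop T m)
        = prodOp T (m + 1) * Uop T m * (Uop T m * prodOpRev T (m + 1)) := by rw [hkey]
      _ = prodOp T (m + 1) * (Uop T m * Uop T m) * prodOpRev T (m + 1) := by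
          rw [mul_assoc, mul_assoc, mul_assoc]
  rw [key]
  have expand : prodOp T n * (1 - (Uop T (n - 1)) ^ 2) * prodOpRev T n =
      prodOp T n * prodOpRev T n - prodOp T n * (Uop T (n - 1)) ^ 2 * prodOpRev T n := by
    noncomm_ring
  rw [expand, hS]
  abel

end Wick
end

section
/- Define T on H ⊗ H by T(e_i ⊗ e_i) = e_i ⊗ e_i and T(e_j ⊗ e_i) = q·(e_i ⊗ e_j) for i ≠ j, with -1 < q < 1. Then T is self-adjoint, braided, and satisfies -1 < T ≤ 1 (its spectrum is contained in (-1, 1]); in particular ker(1 + T) = {0}. -/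
open scoped ComplexOrder

namespace Wick

/-- The operator `T` on `H ⊗ H` with `T(e_i ⊗ e_i) = e_i ⊗ e_i` and
`T(e_j ⊗ e_i) = q (e_i ⊗ e_j)` for `i ≠ j`. -/
noncomputable def Tmix (d : ℕ) (q : ℝ) : Matrix (Fin d × Fin d) (Fin d × Fin d) ℂ :=
  fun p p' =>
    if p = p' ∧ p.1 = p.2 then 1
    else if p.1 = p'.2 ∧ p.2 = p'.1 ∧ p'.1 ≠ p'.2 then (q : ℂ) else 0

/-!
Write `T = q S + (1 - q) D`, where `S` is the flip of `H ⊗ H` and `D` the orthogonal projection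
onto the span of the `e_i ⊗ e_i`. Since `S` is a self-adjoint involution with `S D = D S = D`,
the operators `1 ± S` and `1 + S - 2 D` are twice orthogonal projections, and
`1 + T = (1 - |q|) + |q| (1 ± S) + (1 - q) D` (sign of `q`) and
`2 (1 - T) = (1 + q) (1 - S) + (1 - q) (1 + S - 2 D)`
exhibit `1 + T` as positive definite and `1 - T` as positive semidefinite.
For the braid relation, `T`, `T₁` and `T₂` are monomial matrices (a weight times a map of basis
vectors), so both sides of it are monomial and can be compared basis vector by basis vector.
-/

open Matrix

section Monomial

variable {ι R : Type*} [DecidableEq ι] [Semiring R]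

def monomialMatrix (f : ι → R) (σ : ι → ι) : Matrix ι ι R :=
  Matrix.of fun i j => if j = σ i then f i else 0

theorem monomialMatrix_mul [Fintype ι] (f g : ι → R) (σ τ : ι → ι) :
    monomialMatrix f σ * monomialMatrix g τ =
      monomialMatrix (fun i => f i * g (σ i)) (τ ∘ σ) := by
  ext i j
  rw [mul_apply, Finset.sum_eq_single (σ i) (fun k _ hk => by simp [monomialMatrix, hk])
    (by simp)]
  by_cases h : j = τ (σ i) <;> simp [monomialMatrix, h]

theorem monomialMatrix_one_id : monomialMatrix (1 : ι → R) id = 1 := by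
  ext i j
  simp [monomialMatrix, one_apply, eq_comm]

end Monomial

section TensorFactors

variable {d : ℕ}

theorem Ti_one_apply (T : Matrix (Fin d × Fin d) (Fin d × Fin d) ℂ) (w w' : Fin 3 → Fin d) :
    Ti d 3 T 1 w w' = T (w 0, w 1) (w' 0, w' 1) * (if w 2 = w' 2 then 1 else 0) := by
  simp [Ti, Fin.prod_univ_three]

theorem Ti_two_apply (T : Matrix (Fin d × Fin d) (Fin d × Fin d) ℂ) (w w' : Fin 3 → Fin d) :
    Ti d 3 T 2 w w' = T (w 1, w 2) (w' 1, w' 2) * (if w 0 = w' 0 then 1 else 0) := by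
  simp [Ti, Fin.prod_univ_three]

theorem eq_vecCons_three_iff {α : Type*} (w : Fin 3 → α) (a b c : α) :
    w = ![a, b, c] ↔ w 0 = a ∧ w 1 = b ∧ w 2 = c := by
  simp [funext_iff, Fin.forall_fin_succ]

theorem Ti_one_monomialMatrix (f : Fin d × Fin d → ℂ) (σ : Fin d × Fin d → Fin d × Fin d) :
    Ti d 3 (monomialMatrix f σ) 1 =
      monomialMatrix (fun w => f (w 0, w 1))
        (fun w => ![(σ (w 0, w 1)).1, (σ (w 0, w 1)).2, w 2]) := by
  ext w w'
  rw [Ti_one_apply]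
  simp only [monomialMatrix, of_apply, eq_vecCons_three_iff, Prod.ext_iff]
  by_cases h : w 2 = w' 2
  · simp [h, and_comm]
  · simp [h, Ne.symm h]

theorem Ti_two_monomialMatrix (f : Fin d × Fin d → ℂ) (σ : Fin d × Fin d → Fin d × Fin d) :
    Ti d 3 (monomialMatrix f σ) 2 =
      monomialMatrix (fun w => f (w 1, w 2))
        (fun w => ![w 0, (σ (w 1, w 2)).1, (σ (w 1, w 2)).2]) := by
  ext w w'
  rw [Ti_two_apply]
  simp only [monomialMatrix, of_apply, eq_vecCons_three_iff, Prod.ext_iff]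
  by_cases h : w 0 = w' 0
  · simp [h]
  · simp [h, Ne.symm h]

end TensorFactors

section SwapAndDiagonal

def swapMatrix (α R : Type*) [DecidableEq α] [Semiring R] : Matrix (α × α) (α × α) R :=
  monomialMatrix 1 Prod.swap

def diagProj (α R : Type*) [DecidableEq α] [Semiring R] : Matrix (α × α) (α × α) R :=
  diagonal fun p => if p.1 = p.2 then 1 else 0

variable {α R : Type*} [DecidableEq α] [Semiring R]

theorem swapMatrix_mul_self [Fintype α] : swapMatrix α R * swapMatrix α R = 1 := by
  rw [swapMatrix, monomialMatrix_mul, Prod.swap_swap_eq, ← monomialMatrix_one_id]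
  simp only [Pi.one_apply, mul_one]
  rfl

theorem diagProj_mul_self [Fintype α] : diagProj α R * diagProj α R = diagProj α R := by
  rw [diagProj, diagonal_mul_diagonal]
  congr 1
  funext p
  split_ifs <;> simp

theorem swapMatrix_mul_diagProj [Fintype α] : swapMatrix α R * diagProj α R = diagProj α R := by
  ext ⟨i, j⟩ ⟨k, l⟩
  simp only [swapMatrix, diagProj, mul_diagonal, monomialMatrix, diagonal_apply, of_apply,
    Prod.swap_prod_mk, Prod.mk.injEq, Pi.one_apply]
  by_cases hki : k = j <;> by_cases hlj : l = i <;> by_cases hkl : k = l <;> simp_all [eq_comm]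

variable [StarRing R]

theorem isHermitian_swapMatrix : (swapMatrix α R).IsHermitian := by
  ext ⟨i, j⟩ ⟨k, l⟩
  simp only [swapMatrix, monomialMatrix, conjTranspose_apply, of_apply, Pi.one_apply,
    Prod.swap_prod_mk, Prod.mk.injEq]
  by_cases hil : i = l <;> by_cases hjk : j = k <;> simp_all [eq_comm]

theorem isHermitian_diagProj : (diagProj α R).IsHermitian := by
  rw [diagProj, isHermitian_diagonal_iff]
  intro p
  split_ifs <;> simp

end SwapAndDiagonal

section Spectrum

variable {𝕜 n : Type*} [RCLike 𝕜] [Fintype n]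

theorem posSemidef_of_mul_self_eq_smul {A : Matrix n n 𝕜} (hA : A.IsHermitian) {c : ℝ}
    (hc : 0 < c) (h : A * A = c • A) : A.PosSemidef := by
  have hA_eq : A = c⁻¹ • (Aᴴ * A) := by
    rw [hA.eq, h, smul_smul, inv_mul_cancel₀ hc.ne', one_smul]
  rw [hA_eq]
  exact (posSemidef_conjTranspose_mul_self A).smul (inv_nonneg.mpr hc.le)

variable [DecidableEq n] {S D : Matrix n n 𝕜}

theorem posSemidef_one_add_of_mul_self_eq_one (hS : S.IsHermitian) (hSS : S * S = 1) :
    (1 + S).PosSemidef :=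
  posSemidef_of_mul_self_eq_smul (isHermitian_one.add hS) two_pos <| by
    rw [two_smul]; noncomm_ring; rw [hSS]; abel

theorem posSemidef_one_sub_of_mul_self_eq_one (hS : S.IsHermitian) (hSS : S * S = 1) :
    (1 - S).PosSemidef := by
  simpa only [sub_eq_add_neg] using
    posSemidef_one_add_of_mul_self_eq_one hS.neg (by rw [neg_mul_neg, hSS])

theorem posDef_one_add_smul_add_smul (hS : S.IsHermitian) (hSS : S * S = 1)
    (hD : D.PosSemidef) {q : ℝ} (hq0 : -1 < q) (hq1 : q < 1) :
    (1 + (q • S + (1 - q) • D)).PosDef := by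
  have hD' : ((1 - q) • D).PosSemidef := hD.smul (by linarith)
  rcases le_or_gt 0 q with hq | hq
  · have h_eq : 1 + (q • S + (1 - q) • D) = (1 - q) • 1 + q • (1 + S) + (1 - q) • D := by
      module
    rw [h_eq]
    exact ((PosDef.one.smul (by linarith)).add_posSemidef
      ((posSemidef_one_add_of_mul_self_eq_one hS hSS).smul hq)).add_posSemidef hD'
  · have h_eq : 1 + (q • S + (1 - q) • D) = (1 + q) • 1 + (-q) • (1 - S) + (1 - q) • D := by
      module
    rw [h_eq]
    exact ((PosDef.one.smul (by linarith)).add_posSemidef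
      ((posSemidef_one_sub_of_mul_self_eq_one hS hSS).smul (by linarith))).add_posSemidef hD'

theorem posSemidef_one_sub_smul_add_smul (hS : S.IsHermitian) (hSS : S * S = 1)
    (hD : D.IsHermitian) (hDD : D * D = D) (hSD : S * D = D) {q : ℝ} (hq0 : -1 ≤ q)
    (hq1 : q ≤ 1) : (1 - (q • S + (1 - q) • D)).PosSemidef := by
  have hDS : D * S = D := by
    simpa only [conjTranspose_mul, hS.eq, hD.eq] using congrArg conjTranspose hSD
  have hE : (1 + S - (2 : ℝ) • D).PosSemidef := by
    refine posSemidef_of_mul_self_eq_smul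
      ((isHermitian_one.add hS).sub (hD.smul (IsSelfAdjoint.all _))) two_pos ?_
    simp only [add_mul, mul_add, sub_mul, mul_sub, smul_mul_assoc, mul_smul_comm, hSS, hSD, hDS,
      hDD, one_mul, mul_one]
    module
  have h_eq : 1 - (q • S + (1 - q) • D) =
      ((1 + q) / 2) • (1 - S) + ((1 - q) / 2) • (1 + S - (2 : ℝ) • D) := by
    module
  rw [h_eq]
  exact ((posSemidef_one_sub_of_mul_self_eq_one hS hSS).smul (by linarith)).add
    (hE.smul (by linarith))

end Spectrum

section Tmix

variable {d : ℕ}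

theorem Tmix_eq_monomialMatrix (q : ℝ) :
    Tmix d q = monomialMatrix (fun p => if p.1 = p.2 then 1 else (q : ℂ)) Prod.swap := by
  ext ⟨i, j⟩ ⟨k, l⟩
  simp only [Tmix, monomialMatrix, of_apply, Prod.swap_prod_mk, Prod.mk.injEq]
  by_cases hij : i = j <;> by_cases hkj : k = j <;> by_cases hli : l = i <;> by_cases hkl : k = l <;>
    simp_all [eq_comm]

-- Both sides send `e_a ⊗ e_b ⊗ e_c` to a multiple of `e_c ⊗ e_b ⊗ e_a`, the factor being a
-- product over the three pairs `{a, b}, {a, c}, {b, c}` of `1` or `q`.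
theorem Tmix_braided (q : ℝ) : Braided d (Tmix d q) := by
  rw [Braided, Tmix_eq_monomialMatrix, Ti_one_monomialMatrix, Ti_two_monomialMatrix]
  simp only [monomialMatrix_mul, Prod.swap, Function.comp_def, cons_val_zero, cons_val_one,
    cons_val_two, head_cons, tail_cons]
  congr 1
  funext w
  split_ifs <;> simp_all

theorem Tmix_eq_smul_add_smul (q : ℝ) :
    Tmix d q = q • swapMatrix (Fin d) ℂ + (1 - q) • diagProj (Fin d) ℂ := by
  ext ⟨i, j⟩ ⟨k, l⟩
  simp only [Tmix, swapMatrix, diagProj, monomialMatrix, Matrix.add_apply, Matrix.smul_apply,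
    of_apply, diagonal_apply, Pi.one_apply, Prod.swap_prod_mk, Prod.mk.injEq, Complex.real_smul,
    Complex.ofReal_sub, Complex.ofReal_one]
  split_ifs <;> grind

end Tmix

/-- Define `T` on `H ⊗ H` by `T(e_i ⊗ e_i) = e_i ⊗ e_i` and
`T(e_j ⊗ e_i) = q (e_i ⊗ e_j)` for `i ≠ j`, with `-1 < q < 1`.  Then `T` is
self-adjoint, braided, and satisfies `-1 < T ≤ 1` (spectrum in `(-1, 1]`), i.e.
`1 + T` is positive definite and `1 - T` is positive semidefinite; in particular
`ker(1 + T) = {0}`. -/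
theorem Tmix_selfAdjoint_braided_spectrum (d : ℕ) (q : ℝ) (hq0 : -1 < q) (hq1 : q < 1) :
    (Tmix d q).IsHermitian ∧
      Braided d (Tmix d q) ∧
      (1 + Tmix d q).PosDef ∧
      ((1 : Matrix (Fin d × Fin d) (Fin d × Fin d) ℂ) - Tmix d q).PosSemidef ∧
      LinearMap.ker (1 + Tmix d q).mulVecLin = ⊥ := by
  have hS := isHermitian_swapMatrix (α := Fin d) (R := ℂ)
  have hSS := swapMatrix_mul_self (α := Fin d) (R := ℂ)
  have hD := isHermitian_diagProj (α := Fin d) (R := ℂ)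
  have hDD := diagProj_mul_self (α := Fin d) (R := ℂ)
  have hPD : (1 + Tmix d q).PosDef := by
    rw [Tmix_eq_smul_add_smul]
    exact posDef_one_add_smul_add_smul hS hSS (posSemidef_of_mul_self_eq_smul hD one_pos
      (by rw [hDD, one_smul])) hq0 hq1
  refine ⟨?_, Tmix_braided q, hPD, ?_, ?_⟩
  · rw [Tmix_eq_smul_add_smul]
    exact (hS.smul (IsSelfAdjoint.all _)).add (hD.smul (IsSelfAdjoint.all _))
  · rw [Tmix_eq_smul_add_smul]
    exact posSemidef_one_sub_smul_add_smul hS hSS hD hDD swapMatrix_mul_diagProj hq0.le hq1.le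
  · exact LinearMap.ker_eq_bot.mpr (mulVec_injective_iff_isUnit.mpr hPD.isUnit)

end Wick
end
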